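/- arXiv:2101.08820 — 6 statements merged into one kernel-verified Lean document; each statement's English description precedes it below -/
import Mathlib

section
/- Let X be a topological space, L a clopen subset of X, and R : X → X a continuous retraction (R ∘ R = R) with R[L] ⊆ L. Then the restriction R|_L : L → R[L] is semi-open whenever R : X → R[X] is semi-open. -/
/-! Since `L` is open, `U ∩ L` is open, so semi-openness of `R` gives an open `V` whose trace on
`R[X]` is nonempty and lies in `R[U ∩ L]`. Because `R[L] ⊆ L`, that trace already lies in `L`,
and `V ∩ L` works for `R|_L`: its trace on `R[L] ⊆ R[X]` is contained in the trace of `V`. -/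

open Set

theorem stmt_8_general {X : Type*} [TopologicalSpace X] (L : Set X) (hL : IsClopen L)
    (R : X → X) (hRL : R '' L ⊆ L)
    (hsemi : ∀ U : Set X, IsOpen U → U.Nonempty →
      ∃ V : Set X, IsOpen V ∧ (V ∩ Set.range R).Nonempty ∧ V ∩ Set.range R ⊆ R '' U) :
    ∀ U : Set X, IsOpen U → (U ∩ L).Nonempty →
      ∃ V : Set X, IsOpen V ∧ (V ∩ (R '' L)).Nonempty ∧ V ∩ (R '' L) ⊆ R '' (U ∩ L) := by
  intro U hU hUL
  obtain ⟨V, hV, ⟨x, hxV, hxR⟩, hVsub⟩ := hsemi (U ∩ L) (hU.inter hL.isOpen) hUL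
  have himage : R '' (U ∩ L) ⊆ R '' L := image_mono inter_subset_right
  have hxRL : x ∈ R '' L := himage (hVsub ⟨hxV, hxR⟩)
  refine ⟨V ∩ L, hV.inter hL.isOpen, ⟨x, ⟨hxV, hRL hxRL⟩, hxRL⟩, ?_⟩
  rintro y ⟨⟨hyV, -⟩, hyRL⟩
  exact hVsub ⟨hyV, image_subset_range R L hyRL⟩

/-- If `L` is clopen in `X`, `R : X → X` is a continuous retraction with `R[L] ⊆ L`,
and `R : X → R[X]` is semi-open (images of nonempty open sets have nonempty interior
relative to `R[X]`), then the restriction `R|_L : L → R[L]` is semi-open: the image of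
every nonempty relatively open subset of `L` has nonempty interior relative to `R[L]`. -/
theorem stmt_8 {X : Type*} [TopologicalSpace X] (L : Set X) (hL : IsClopen L)
    (R : X → X) (hRc : Continuous R) (hRR : ∀ x, R (R x) = R x) (hRL : R '' L ⊆ L)
    (hsemi : ∀ U : Set X, IsOpen U → U.Nonempty →
      ∃ V : Set X, IsOpen V ∧ (V ∩ Set.range R).Nonempty ∧ V ∩ Set.range R ⊆ R '' U) :
    ∀ U : Set X, IsOpen U → (U ∩ L).Nonempty →
      ∃ V : Set X, IsOpen V ∧ (V ∩ (R '' L)).Nonempty ∧ V ∩ (R '' L) ⊆ R '' (U ∩ L) :=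
  stmt_8_general L hL R hRL hsemi
end

section
/- Let {K^α : α ∈ I} be a family of topological spaces, each equipped with a map R^α : K^α → K^α such that R^α : K^α → R^α[K^α] is semi-open. Fix for each α a point x_α ∈ R^α[K^α] and a subset β ⊆ I, and define P : ∏_α K^α → ∏_α K^α by P(y)(α) = R^α(y(α)) for α ∈ β and P(y)(α) = x_α otherwise. Then P : ∏_α K^α → P[∏_α K^α] is semi-open (with respect to the product topology). -/
/-- If each `R α : K α → R α [K α]` is semi-open, `x α ∈ R α [K α]` are fixed points,
`β ⊆ I`, and `P` is defined on the product by `P y α = R α (y α)` for `α ∈ β` and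
`P y α = x α` otherwise, then `P : ∏ K α → P[∏ K α]` is semi-open. -/
theorem stmt_9 {I : Type*} (K : I → Type*) [∀ α, TopologicalSpace (K α)]
    (R : ∀ α, K α → K α)
    (hsemi : ∀ α, ∀ U : Set (K α), IsOpen U → U.Nonempty →
      ∃ V : Set (K α), IsOpen V ∧ (V ∩ Set.range (R α)).Nonempty ∧
        V ∩ Set.range (R α) ⊆ R α '' U)
    (x : ∀ α, K α) (hx : ∀ α, x α ∈ Set.range (R α))
    (β : Set I) [DecidablePred (· ∈ β)]
    (P : (∀ α, K α) → (∀ α, K α))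
    (hP : ∀ y α, P y α = if α ∈ β then R α (y α) else x α) :
    ∀ U : Set (∀ α, K α), IsOpen U → U.Nonempty →
      ∃ V : Set (∀ α, K α), IsOpen V ∧ (V ∩ Set.range P).Nonempty ∧
        V ∩ Set.range P ⊆ P '' U := by
  
  classical
  rintro U hU ⟨y₀, hy₀⟩
  obtain ⟨F, u, hu, hbox⟩ := isOpen_pi_iff.mp hU y₀ hy₀
  -- choose semi-open witnesses coordinatewise
  have key : ∀ α, ∃ V : Set (K α), IsOpen V ∧ (V ∩ Set.range (R α)).Nonempty ∧
      V ∩ Set.range (R α) ⊆ R α '' (if α ∈ F ∧ α ∈ β then u α else Set.univ) := by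
    intro α
    by_cases h : α ∈ F ∧ α ∈ β
    · simpa [h] using hsemi α (u α) (hu α h.1).1 ⟨y₀ α, (hu α h.1).2⟩
    · refine ⟨Set.univ, isOpen_univ, ⟨x α, trivial, hx α⟩, ?_⟩
      simp [h, Set.image_univ]
  choose V hVopen hVne hVsub using key
  set S : Set I := ↑F ∩ β with hS
  have hSfin : S.Finite := F.finite_toSet.inter_of_left β
  refine ⟨S.pi V, isOpen_set_pi hSfin fun α _ => hVopen α, ?_, ?_⟩
  · -- nonemptiness
    have hv : ∀ α, ∃ w, w ∈ (if α ∈ F ∧ α ∈ β then u α else Set.univ) ∧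
        R α w ∈ V α := by
      intro α
      obtain ⟨v, hv⟩ := hVne α
      obtain ⟨w, hw, hwv⟩ := hVsub α hv
      exact ⟨w, hw, hwv ▸ hv.1⟩
    choose w hw1 hw2 using hv
    refine ⟨P w, ⟨fun α hα => ?_, w, rfl⟩⟩
    have hβ : α ∈ β := hα.2
    rw [hP, if_pos hβ]
    exact hw2 α
  · -- inclusion
    rintro z ⟨hzV, y, rfl⟩
    have hz : ∀ α, ∃ w, (α ∈ F ∧ α ∈ β → w ∈ u α ∧ R α w = P y α) ∧
        (¬(α ∈ F ∧ α ∈ β) → w = if α ∈ F then y₀ α else y α) := by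
      intro α
      by_cases h : α ∈ F ∧ α ∈ β
      · have h1 : P y α ∈ V α := hzV α ⟨h.1, h.2⟩
        have h2 : P y α ∈ Set.range (R α) := by
          rw [hP, if_pos h.2]; exact ⟨y α, rfl⟩
        obtain ⟨w, hw, hww⟩ := hVsub α ⟨h1, h2⟩
        rw [if_pos h] at hw
        exact ⟨w, fun _ => ⟨hw, hww⟩, fun h' => absurd h h'⟩
      · exact ⟨if α ∈ F then y₀ α else y α, fun h' => absurd h' h, fun _ => rfl⟩
    choose g hg1 hg2 using hz
    refine ⟨g, hbox fun α hα => ?_, ?_⟩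
    · by_cases hβ : α ∈ β
      · exact (hg1 α ⟨hα, hβ⟩).1
      · rw [hg2 α (fun h => hβ h.2), if_pos (Finset.mem_coe.mp hα)]
        exact (hu α hα).2
    · funext α
      by_cases hβ : α ∈ β
      · by_cases hF : α ∈ F
        · rw [hP, if_pos hβ, (hg1 α ⟨hF, hβ⟩).2]
        · rw [hP, if_pos hβ, hg2 α (fun h => hF h.1), if_neg hF, hP, if_pos hβ]
      · rw [hP, if_neg hβ, hP y, if_neg hβ]
end

section
/- Let {Kⁿ : n ∈ ω} be a countable family of compact Hausdorff spaces and let K = (⨆ₙ Kⁿ) ∪ {∞} be the one-point compactification of their topological sum. Suppose each Kⁿ carries a retraction Rⁿ : Kⁿ → Kⁿ such that Rⁿ : Kⁿ → Rⁿ[Kⁿ] is semi-open. Define P : K → K by P(x) = Rⁿ(x) for x ∈ Kⁿ and P(∞) = ∞. Then P is a continuous retraction and P : K → P[K] is semi-open. -/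
/-- Let `K = OnePoint (Σ n, K n)` be the one-point compactification of the topological
sum of countably many compact Hausdorff spaces, each carrying a retraction
`R n : K n → K n` that is semi-open onto its image. The induced map `P` (acting as `R n`
on `K n` and fixing `∞`) is a continuous retraction and `P : K → P[K]` is semi-open. -/
theorem stmt_10 (K : ℕ → Type*) [∀ n, TopologicalSpace (K n)]
    [∀ n, CompactSpace (K n)] [∀ n, T2Space (K n)]
    (R : ∀ n, K n → K n) (hRc : ∀ n, Continuous (R n)) (hRR : ∀ n x, R n (R n x) = R n x)
    (hsemi : ∀ n, ∀ U : Set (K n), IsOpen U → U.Nonempty →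
      ∃ V : Set (K n), IsOpen V ∧ (V ∩ Set.range (R n)).Nonempty ∧
        V ∩ Set.range (R n) ⊆ R n '' U)
    (P : OnePoint (Σ n, K n) → OnePoint (Σ n, K n))
    (hPinf : P OnePoint.infty = OnePoint.infty)
    (hPx : ∀ (n : ℕ) (x : K n), P (OnePoint.some ⟨n, x⟩) = OnePoint.some ⟨n, R n x⟩) :
    Continuous P ∧ (∀ z, P (P z) = P z) ∧
      ∀ U : Set (OnePoint (Σ n, K n)), IsOpen U → U.Nonempty →
        ∃ V : Set (OnePoint (Σ n, K n)), IsOpen V ∧ (V ∩ Set.range P).Nonempty ∧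
          V ∩ Set.range P ⊆ P '' U := by
  classical
  set f : (Σ n, K n) → (Σ n, K n) := fun x => ⟨x.1, R x.1 x.2⟩ with hf
  have hfc : Continuous f := continuous_sigma fun n => continuous_sigmaMk.comp (hRc n)
  have hPcoe : ∀ x : Σ n, K n, P (OnePoint.some x) = OnePoint.some (f x) := by
    rintro ⟨n, y⟩; exact hPx n y
  -- P is a retraction
  have hretr : ∀ z, P (P z) = P z := by
    rintro (_ | ⟨n, x⟩)
    · show P (P OnePoint.infty) = P OnePoint.infty
      rw [hPinf, hPinf]
    · show P (P (OnePoint.some ⟨n, x⟩)) = P (OnePoint.some ⟨n, x⟩)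
      rw [hPx, hPx, hRR]
  -- preimages of compacts under f are compact
  have hcpt : ∀ C : Set (Σ n, K n), IsCompact C → IsCompact (f ⁻¹' C) := by
    intro C hC
    have hfin : (Sigma.fst '' C).Finite :=
      (hC.image (continuous_sigma fun n => continuous_const)).finite_of_discrete
    have hsub : f ⁻¹' C ⊆ ⋃ n ∈ Sigma.fst '' C, Set.range (Sigma.mk n) := by
      rintro ⟨n, y⟩ hx
      refine Set.mem_biUnion ?_ ⟨y, rfl⟩
      exact ⟨f ⟨n, y⟩, hx, rfl⟩
    have hbig : IsCompact (⋃ n ∈ Sigma.fst '' C, Set.range (@Sigma.mk ℕ K n)) :=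
      hfin.isCompact_biUnion fun n _ => isCompact_range continuous_sigmaMk
    exact hbig.of_isClosed_subset (hC.isClosed.preimage hfc) hsub
  -- continuity of P
  have hPc : Continuous P := by
    rw [OnePoint.continuous_iff]
    constructor
    · have h1 : Filter.Tendsto f (Filter.cocompact _) (Filter.cocompact _) := by
        rw [Filter.hasBasis_cocompact.tendsto_iff Filter.hasBasis_cocompact]
        intro C hC
        exact ⟨f ⁻¹' C, hcpt C hC, fun x hx => hx⟩
      have h2 : Filter.Tendsto (fun x : Σ n, K n => OnePoint.some (f x))
          (Filter.coclosedCompact _) (nhds OnePoint.infty) := by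
        rw [Filter.coclosedCompact_eq_cocompact]
        exact (OnePoint.tendsto_coe_infty.mono_left
          Filter.cocompact_le_coclosedCompact).comp h1
      simpa only [hPcoe, hPinf] using h2
    · simp only [hPcoe]
      exact OnePoint.continuous_coe.comp hfc
  refine ⟨hPc, hretr, ?_⟩
  intro U hU hUne
  by_cases h : ∃ (n : ℕ) (x : K n), OnePoint.some ⟨n, x⟩ ∈ U
  · obtain ⟨n, x, hx⟩ := h
    set Un : Set (K n) := (fun y => OnePoint.some (⟨n, y⟩ : Σ n, K n)) ⁻¹' U with hUn
    have hUno : IsOpen Un := hU.preimage (OnePoint.continuous_coe.comp continuous_sigmaMk)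
    obtain ⟨V₀, hV₀o, ⟨v, hvV, w, hvw⟩, hV₀sub⟩ := hsemi n Un hUno ⟨x, hx⟩
    refine ⟨OnePoint.some '' (Sigma.mk n '' V₀), ?_, ?_, ?_⟩
    · exact OnePoint.isOpenMap_coe _ (isOpenMap_sigmaMk _ hV₀o)
    · refine ⟨OnePoint.some ⟨n, v⟩, ⟨⟨n, v⟩, ⟨v, hvV, rfl⟩, rfl⟩,
        OnePoint.some ⟨n, w⟩, ?_⟩
      rw [hPx, hvw]
    · rintro z ⟨⟨_, ⟨v', hv', rfl⟩, rfl⟩, q, hq⟩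
      -- z = some ⟨n, v'⟩ with v' ∈ V₀, and z = P q
      have hv'r : v' ∈ Set.range (R n) := by
        rcases q with _ | ⟨m, y⟩
        · rw [show P Option.none = OnePoint.infty from hPinf] at hq
          exact absurd hq (by simp [OnePoint.infty, OnePoint.some])
        · rw [show (Option.some ⟨m, y⟩ : OnePoint (Σ n, K n)) =
              OnePoint.some ⟨m, y⟩ from rfl, hPx] at hq
          have : (⟨m, R m y⟩ : Σ n, K n) = ⟨n, v'⟩ := Option.some_injective _ hq
          obtain ⟨rfl, h2⟩ := Sigma.mk.inj_iff.mp this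
          exact ⟨y, eq_of_heq h2⟩
      obtain ⟨u, huU, huv⟩ := hV₀sub ⟨hv', hv'r⟩
      exact ⟨OnePoint.some ⟨n, u⟩, huU, by rw [hPx, huv]⟩
  · -- U contains no point of the sum, so U = {∞}
    obtain ⟨z, hz⟩ := hUne
    have hzinf : z = OnePoint.infty := by
      rcases z with _ | ⟨m, y⟩
      · rfl
      · exact absurd ⟨m, y, hz⟩ h
    refine ⟨U, hU, ⟨OnePoint.infty, hzinf ▸ hz, OnePoint.infty, hPinf⟩, ?_⟩
    rintro w ⟨hwU, q, rfl⟩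
    exact ⟨P q, hwU, hretr q⟩
end

section
/- Let (K_s)_{s ∈ Σ}, (p_s^t) be an inverse system of compact Hausdorff spaces over a directed set Σ with surjective bonding maps and inverse limit (K, (p_s)). If every bonding map p_s^t is semi-open, then every projection p_s : K → K_s is semi-open. -/
/-- The space of threads (the standard inverse limit) of an inverse system. -/
def Threads {S : Type*} [Preorder S] (K : S → Type*) [∀ s, TopologicalSpace (K s)]
    (p : ∀ ⦃s t : S⦄, s ≤ t → K t → K s) : Set (∀ s, K s) :=
  {x | ∀ ⦃s t : S⦄ (h : s ≤ t), p h (x t) = x s}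

/-- For an inverse system of compact Hausdorff spaces over a directed index set with
surjective bonding maps, whose inverse limit (the thread space) has surjective
projections: if every bonding map is semi-open, then every projection from the
inverse limit is semi-open. -/
theorem stmt_14 {S : Type*} [Preorder S] (hdir : ∀ s t : S, ∃ r, s ≤ r ∧ t ≤ r)
    (K : S → Type*) [∀ s, TopologicalSpace (K s)]
    [∀ s, CompactSpace (K s)] [∀ s, T2Space (K s)]
    (p : ∀ ⦃s t : S⦄, s ≤ t → K t → K s)
    (hpc : ∀ ⦃s t : S⦄ (h : s ≤ t), Continuous (p h))
    (hpsurj : ∀ ⦃s t : S⦄ (h : s ≤ t), Function.Surjective (p h))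
    (hpid : ∀ (s : S) (h : s ≤ s) (x : K s), p h x = x)
    (hpcomp : ∀ ⦃s t r : S⦄ (h₁ : s ≤ t) (h₂ : t ≤ r) (x : K r),
      p (h₁.trans h₂) x = p h₁ (p h₂ x))
    (hprojsurj : ∀ s : S,
      Function.Surjective (fun x : Threads K p => (x : ∀ s, K s) s))
    (hsemi : ∀ ⦃s t : S⦄ (h : s ≤ t), ∀ U : Set (K t), IsOpen U → U.Nonempty →
      (interior (p h '' U)).Nonempty) :
    ∀ s : S, ∀ U : Set (Threads K p), IsOpen U → U.Nonempty →
      (interior ((fun x : Threads K p => (x : ∀ s, K s) s) '' U)).Nonempty := by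
  classical
  intro s U hU hUne
  obtain ⟨x, hxU⟩ := hUne
  rw [isOpen_induced_iff] at hU
  obtain ⟨O, hO, hOU⟩ := hU
  have hxO : (x : ∀ s, K s) ∈ O := by
    have : x ∈ (Subtype.val ⁻¹' O : Set (Threads K p)) := hOU ▸ hxU
    exact this
  obtain ⟨I, u, hIu, hpiO⟩ := isOpen_pi_iff.mp hO _ hxO
  haveI : Nonempty S := ⟨s⟩
  haveI : IsDirected S (· ≤ ·) := ⟨hdir⟩
  obtain ⟨M, hM⟩ := I.exists_le
  obtain ⟨r, hsr, hMr⟩ := hdir s M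
  have hir : ∀ i ∈ I, i ≤ r := fun i hi => (hM i hi).trans hMr
  set V : Set (K r) := ⋂ i ∈ I, (if h : i ≤ r then (p h) ⁻¹' u i else Set.univ)
    with hV
  have hVopen : IsOpen V := by
    apply isOpen_biInter_finset
    intro i hi
    rw [dif_pos (hir i hi)]
    exact ((hIu i hi).1).preimage (hpc _)
  have hxV : (x : ∀ s, K s) r ∈ V := by
    refine Set.mem_iInter₂.mpr fun i hi => ?_
    rw [dif_pos (hir i hi)]
    have := x.2 (hir i hi)
    simpa [this] using (hIu i hi).2
  have hsub : p hsr '' V ⊆ (fun x : Threads K p => (x : ∀ s, K s) s) '' U := by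
    rintro _ ⟨v, hvV, rfl⟩
    obtain ⟨y, hy⟩ := hprojsurj r v
    have hyO : (y : ∀ s, K s) ∈ O := by
      apply hpiO
      intro i hi
      have h1 : (y : ∀ s, K s) i = p (hir i hi) v := by
        rw [← hy]; exact (y.2 (hir i hi)).symm
      have := Set.mem_iInter₂.mp hvV i hi
      rw [dif_pos (hir i hi)] at this
      rw [h1]; exact this
    refine ⟨y, ?_, ?_⟩
    · rw [← hOU]; exact hyO
    · show (y : ∀ s, K s) s = p hsr v
      rw [← hy]; exact (y.2 hsr).symm
  have := hsemi hsr V hVopen ⟨_, hxV⟩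
  exact this.mono (interior_mono hsub)
end

section
/- Let κ be an ordinal and ((K_α)_{α<κ}, (p_α^β)_{α≤β}) a continuous inverse system of compact Hausdorff spaces with surjective bonding maps, meaning that for each limit ordinal λ < κ, (K_λ, (p_γ^λ)_{γ<λ}) is the inverse limit of the restricted system. If p_α^{α+1} is semi-open for every α with α+1 < κ, then p_α^β is semi-open for all α ≤ β < κ. -/
/-!
Induction on `β`. At a successor the map `p α (β + 1)` factors as `p α β ∘ p β (β + 1)`, and
semi-open maps compose. At a limit `β`, the space `K β` embeds in the product of the earlier
stages (an injective continuous map out of a compact space into a Hausdorff one), so a nonempty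
open `U ⊆ K β` contains a set `(p δ β)⁻¹' V` with `α ≤ δ < β` and `V` nonempty open in `K δ`.
Since `p δ β` is surjective, `p α β '' U ⊇ p α δ '' V`, which has nonempty interior by induction.
-/

open Set Topology

def IsSemiOpenMap {X Y : Type*} [TopologicalSpace X] [TopologicalSpace Y] (f : X → Y) : Prop :=
  ∀ U : Set X, IsOpen U → U.Nonempty → (interior (f '' U)).Nonempty

namespace IsSemiOpenMap

variable {X Y Z : Type*} [TopologicalSpace X] [TopologicalSpace Y] [TopologicalSpace Z]

theorem id : IsSemiOpenMap (id : X → X) := fun U hU hne => by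
  rwa [image_id, hU.interior_eq]

theorem comp {g : Y → Z} {f : X → Y} (hg : IsSemiOpenMap g) (hf : IsSemiOpenMap f) :
    IsSemiOpenMap (g ∘ f) := fun U hU hne =>
  (hg _ isOpen_interior (hf U hU hne)).mono <| by
    rw [image_comp]
    exact interior_mono (image_mono interior_subset)

end IsSemiOpenMap

theorem exists_isOpen_preimage_subset_of_isInducing_pi {X ι : Type*} [TopologicalSpace X]
    [Preorder ι] [IsDirectedOrder ι] {Z : ι → Type*} [∀ i, TopologicalSpace (Z i)]
    {π : ∀ i j, i ≤ j → Z j → Z i} (hπ : ∀ i j h, Continuous (π i j h))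
    {q : ∀ i, X → Z i} (hq : ∀ i j (h : i ≤ j) x, π i j h (q j x) = q i x)
    (he : IsInducing fun x i => q i x) {U : Set X} (hU : IsOpen U) {x : X} (hx : x ∈ U)
    (i₀ : ι) : ∃ j, i₀ ≤ j ∧ ∃ V : Set (Z j), IsOpen V ∧ q j x ∈ V ∧ q j ⁻¹' V ⊆ U := by
  classical
  have : Nonempty ι := ⟨i₀⟩
  obtain ⟨W, hW, rfl⟩ := he.isOpen_iff.mp hU
  obtain ⟨I, u, hu, hsub⟩ := isOpen_pi_iff.mp hW (fun i => q i x) hx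
  obtain ⟨j, hj⟩ := (insert i₀ I).exists_le
  have hIj : ∀ i ∈ I, i ≤ j := fun i hi => hj i (Finset.mem_insert_of_mem hi)
  refine ⟨j, hj i₀ (Finset.mem_insert_self _ _), ⋂ i : I, π i j (hIj i i.2) ⁻¹' u i,
    isOpen_iInter_of_finite fun i => (hu i i.2).1.preimage (hπ _ _ _), ?_, ?_⟩
  · simpa only [mem_iInter, mem_preimage, hq, Subtype.forall] using fun i hi => (hu i hi).2
  · intro y hy
    refine hsub fun i hi => ?_
    simpa only [mem_preimage, hq] using mem_iInter.mp hy ⟨i, hi⟩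

/-- Let `((K α)_{α<κ}, (p α β)_{α≤β})` be a continuous inverse system of compact
Hausdorff spaces with surjective bonding maps, indexed by an ordinal `κ`; continuity
means that at each limit ordinal `lam < κ`, `K lam` together with the maps
`p γ lam` is the inverse limit (thread space) of the earlier stages. If
`p α (α+1)` is semi-open for every `α` with `α+1 < κ`, then `p α β` is semi-open for
all `α ≤ β < κ`. -/
theorem stmt_15 (κ : Ordinal.{0})
    (K : ∀ α : Ordinal, α < κ → Type*)
    [∀ α hα, TopologicalSpace (K α hα)] [∀ α hα, CompactSpace (K α hα)]
    [∀ α hα, T2Space (K α hα)]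
    (p : ∀ (α β : Ordinal) (hα : α < κ) (hβ : β < κ), α ≤ β → K β hβ → K α hα)
    (hpc : ∀ α β hα hβ (h : α ≤ β), Continuous (p α β hα hβ h))
    (hpsurj : ∀ α β hα hβ (h : α ≤ β), Function.Surjective (p α β hα hβ h))
    (hpid : ∀ α hα (x : K α hα), p α α hα hα le_rfl x = x)
    (hpcomp : ∀ α β γ hα hβ hγ (h₁ : α ≤ β) (h₂ : β ≤ γ) (x : K γ hγ),
      p α γ hα hγ (h₁.trans h₂) x = p α β hα hβ h₁ (p β γ hβ hγ h₂ x))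
    (hcontinuous : ∀ (lam : Ordinal) (hlam : lam < κ), Order.IsSuccLimit lam →
      (Function.Injective (fun (x : K lam hlam) (γ : {γ : Ordinal // γ < lam}) =>
          p γ.1 lam (γ.2.trans hlam) hlam γ.2.le x)) ∧
      (∀ y : ∀ γ : {γ : Ordinal // γ < lam}, K γ.1 (γ.2.trans hlam),
        (∀ (γ₁ γ₂ : {γ : Ordinal // γ < lam}) (h : γ₁.1 ≤ γ₂.1),
          p γ₁.1 γ₂.1 (γ₁.2.trans hlam) (γ₂.2.trans hlam) h (y γ₂) = y γ₁) →
        ∃ x : K lam hlam, ∀ γ : {γ : Ordinal // γ < lam},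
          p γ.1 lam (γ.2.trans hlam) hlam γ.2.le x = y γ))
    (hsucc : ∀ (α : Ordinal) (hs : Order.succ α < κ),
      ∀ U : Set (K (Order.succ α) hs), IsOpen U → U.Nonempty →
        (interior (p α (Order.succ α) ((Order.lt_succ α).trans hs) hs
          (Order.le_succ α) '' U)).Nonempty) :
    ∀ α β hα hβ (h : α ≤ β), ∀ U : Set (K β hβ), IsOpen U → U.Nonempty →
      (interior (p α β hα hβ h '' U)).Nonempty := by
  suffices key : ∀ β hβ α hα (h : α ≤ β), IsSemiOpenMap (p α β hα hβ h) from
    fun α β hα hβ h => key β hβ α hα h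
  intro β
  induction β using WellFoundedLT.induction with
  | ind β IH =>
  intro hβ α hα hle
  rcases hle.eq_or_lt with rfl | hlt
  · rw [show p α α hα hβ hle = id from funext (hpid α hα)]
    exact IsSemiOpenMap.id
  rcases Ordinal.zero_or_succ_or_isSuccLimit β with rfl | ⟨γ, rfl⟩ | hlim
  · exact (not_lt_zero hlt).elim
  · have hγ : γ < κ := (Order.lt_succ γ).trans hβ
    have hαγ : α ≤ γ := Order.lt_succ_iff.mp hlt
    rw [show p α _ hα hβ hle = p α γ hα hγ hαγ ∘ p γ _ hγ hβ (Order.le_succ γ) from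
      funext (hpcomp α γ _ hα hγ hβ hαγ (Order.le_succ γ))]
    exact (IH γ (Order.lt_succ γ) hγ α hα hαγ).comp (hsucc γ hβ)
  · intro U hU ⟨x, hx⟩
    have hinducing : IsInducing fun (x : K β hβ) (γ : {γ : Ordinal // γ < β}) =>
        p γ.1 β (γ.2.trans hβ) hβ γ.2.le x :=
      ((continuous_pi fun _ => hpc _ _ _ _ _).isClosedEmbedding
        (hcontinuous β hβ hlim).1).isInducing
    obtain ⟨δ, hαδ, V, hV, hxV, hVU⟩ := exists_isOpen_preimage_subset_of_isInducing_pi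
      (ι := {γ : Ordinal // γ < β})
      (π := fun γ₁ γ₂ h => p γ₁.1 γ₂.1 (γ₁.2.trans hβ) (γ₂.2.trans hβ) h)
      (fun _ _ _ => hpc _ _ _ _ _) (fun γ₁ γ₂ h x => (hpcomp _ _ _ _ _ _ h γ₂.2.le x).symm)
      hinducing hU hx ⟨α, hlt⟩
    refine (IH δ.1 δ.2 _ α hα hαδ V hV ⟨_, hxV⟩).mono (interior_mono ?_)
    rw [← image_preimage_eq V (hpsurj _ _ _ hβ δ.2.le), image_image]
    simp_rw [← hpcomp]
    exact image_mono hVU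
end

section
/- There exists a σ-complete inverse system on the index set [1, ω+1] = {1, 2, ..., ω, ω+1} of finite/countable compact metric spaces with surjective bonding maps such that the set T = {α : there exists an open map f_α : K_α → L_α with q_α^{ω+1} ∘ f = f_α ∘ p_α^{ω+1}} contains all natural numbers n ≥ 1 but does not contain ω = sup_n n; i.e., T is not σ-closed. Concretely: with K_n = {−1, −1/2, …, −1/n, 0, 1/n, …, 1/2, 1} discrete, K_ω = K_{ω+1} = {±1/n : n ≥ 1} ∪ {0} ⊆ ℝ, bonding maps sending points outside the range to 0, L_n = {0, 1/n, …, 1} discrete, L_ω = {0} ∪ {1/n}, L_{ω+1} = K_{ω+1}, q_ω^{ω+1}(x) = x if x ≥ 0 and 0 if x < 0, and f = id : K_{ω+1} → L_{ω+1}: for each n the map f_n(x) = x for x ∈ L_n, f_n(x) = 0 otherwise, is open and satisfies the commutativity condition, but q_ω^{ω+1} is not an open map. -/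
/-- `K_ω = K_{ω+1} = {−1/n : n ≥ 1} ∪ {0} ∪ {1/n : n ≥ 1} ⊆ ℝ`. -/
def Komega : Set ℝ :=
  {x : ℝ | x = 0 ∨ ∃ n : ℕ, 1 ≤ n ∧ (x = 1 / n ∨ x = -(1 / n))}

/-- `L_ω = {0} ∪ {1/n : n ≥ 1} ⊆ ℝ`. -/
def Lomega : Set ℝ :=
  {x : ℝ | x = 0 ∨ ∃ n : ℕ, 1 ≤ n ∧ x = 1 / n}

/-- `K_n = {−1, …, −1/n, 0, 1/n, …, 1}` (finite, hence discrete as a subspace of `ℝ`). -/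
def Kfin (n : ℕ) : Set ℝ :=
  {x : ℝ | x = 0 ∨ ∃ m : ℕ, 1 ≤ m ∧ m ≤ n ∧ (x = 1 / m ∨ x = -(1 / m))}

/-- `L_n = {0, 1/n, …, 1/2, 1}`. -/
def Lfin (n : ℕ) : Set ℝ :=
  {x : ℝ | x = 0 ∨ ∃ m : ℕ, 1 ≤ m ∧ m ≤ n ∧ x = 1 / m}

open Classical

private lemma mpos {m : ℕ} (hm : 1 ≤ m) : (0:ℝ) < 1 / m := by
  have : (0:ℝ) < m := by exact_mod_cast hm
  positivity

private lemma hpos (n : ℕ) : (0:ℝ) < 1 / ((n:ℝ) + 1) := by positivity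

private lemma le_div_iff'' {m n : ℕ} (hm : 1 ≤ m) :
    (1:ℝ) / ((n:ℝ) + 1) ≤ 1 / m ↔ m ≤ n + 1 := by
  have h1 : (0:ℝ) < (n:ℝ) + 1 := by positivity
  have h2 : (0:ℝ) < m := by exact_mod_cast hm
  rw [one_div_le_one_div h1 h2]
  exact_mod_cast Iff.rfl

private lemma lt_div_iff'' {m n : ℕ} (hm : 1 ≤ m) :
    (1:ℝ) / ((n:ℝ) + 2) < 1 / m ↔ m < n + 2 := by
  have h1 : (0:ℝ) < (n:ℝ) + 2 := by positivity
  have h2 : (0:ℝ) < m := by exact_mod_cast hm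
  rw [one_div_lt_one_div h1 h2]
  exact_mod_cast Iff.rfl

private lemma zero_mem_K : (0:ℝ) ∈ Komega := Or.inl rfl
private lemma zero_mem_L : (0:ℝ) ∈ Lomega := Or.inl rfl

private lemma K_abs {x : ℝ} (hx : x ∈ Komega) (hx0 : x ≠ 0) :
    ∃ m : ℕ, 1 ≤ m ∧ |x| = 1 / m ∧ (x = 1/m ∨ x = -(1/m)) := by
  rcases hx with rfl | ⟨m, hm, hc⟩
  · exact absurd rfl hx0
  · refine ⟨m, hm, ?_, hc⟩
    rcases hc with rfl | rfl
    · exact abs_of_pos (mpos hm)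
    · rw [abs_neg]; exact abs_of_pos (mpos hm)

private lemma L_nonneg {x : ℝ} (hx : x ∈ Lomega) : 0 ≤ x := by
  rcases hx with rfl | ⟨m, hm, rfl⟩
  · exact le_rfl
  · exact (mpos hm).le

private lemma L_subset_K : Lomega ⊆ Komega := fun x hx => by
  rcases hx with rfl | ⟨m, hm, rfl⟩
  · exact zero_mem_K
  · exact Or.inr ⟨m, hm, Or.inl rfl⟩

private lemma Kfin_subset_K {n : ℕ} : Kfin n ⊆ Komega := fun x hx => by
  rcases hx with rfl | ⟨m, hm, _, hc⟩
  · exact zero_mem_K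
  · exact Or.inr ⟨m, hm, hc⟩

private lemma Lfin_subset_L {n : ℕ} : Lfin n ⊆ Lomega := fun x hx => by
  rcases hx with rfl | ⟨m, hm, _, hc⟩
  · exact zero_mem_L
  · exact Or.inr ⟨m, hm, hc⟩

private lemma q_mem {x : ℝ} (hx : x ∈ Komega) : max x 0 ∈ Lomega := by
  rcases le_total (0:ℝ) x with h | h
  · rw [max_eq_left h]
    rcases hx with rfl | ⟨m, hm, rfl | rfl⟩
    · exact zero_mem_L
    · exact Or.inr ⟨m, hm, rfl⟩
    · have := mpos hm; exfalso; linarith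
  · rw [max_eq_right h]; exact zero_mem_L

private lemma p_mem (n : ℕ) {x : ℝ} (hx : x ∈ Komega) :
    (if (1:ℝ) / ((n:ℝ) + 1) ≤ |x| then x else 0) ∈ Kfin (n + 1) := by
  split_ifs with h
  · have hx0 : x ≠ 0 := by
      rintro rfl; rw [abs_zero] at h; exact absurd h (not_le.2 (hpos n))
    obtain ⟨m, hm, habs, hc⟩ := K_abs hx hx0
    rw [habs] at h
    exact Or.inr ⟨m, hm, (le_div_iff'' hm).1 h, hc⟩
  · exact Or.inl rfl

private lemma qn_mem (n : ℕ) {y : ℝ} (hy : y ∈ Lomega) :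
    (if (1:ℝ) / ((n:ℝ) + 1) ≤ y then y else 0) ∈ Lfin (n + 1) := by
  split_ifs with h
  · rcases hy with rfl | ⟨m, hm, rfl⟩
    · exact absurd h (not_le.2 (hpos n))
    · exact Or.inr ⟨m, hm, (le_div_iff'' hm).1 h, rfl⟩
  · exact Or.inl rfl

private lemma f_mem (n : ℕ) {x : ℝ} (hx : x ∈ Kfin (n + 1)) :
    (if (1:ℝ) / ((n:ℝ) + 1) ≤ x then x else 0) ∈ Lfin (n + 1) := by
  split_ifs with h
  · rcases hx with rfl | ⟨m, hm, hmn, rfl | rfl⟩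
    · exact absurd h (not_le.2 (hpos n))
    · exact Or.inr ⟨m, hm, hmn, rfl⟩
    · have := mpos hm; have := hpos n; exfalso; linarith
  · exact Or.inl rfl

-- finiteness
private lemma Kfin_finite (n : ℕ) : (Kfin n).Finite := by
  apply Set.Finite.subset (((Set.finite_Iic n).image (fun m : ℕ => (1:ℝ)/m)).union
    (((Set.finite_Iic n).image (fun m : ℕ => -((1:ℝ)/m))).union (Set.finite_singleton 0)))
  rintro x (rfl | ⟨m, hm, hmn, rfl | rfl⟩)
  · exact Or.inr (Or.inr rfl)
  · exact Or.inl ⟨m, hmn, rfl⟩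
  · exact Or.inr (Or.inl ⟨m, hmn, rfl⟩)

private lemma Lfin_finite (n : ℕ) : (Lfin n).Finite := by
  apply Set.Finite.subset ((Set.finite_Iic n).image (fun m : ℕ => (1:ℝ)/m) |>.union
    (Set.finite_singleton 0))
  rintro x (rfl | ⟨m, hm, hmn, rfl⟩)
  · exact Or.inr rfl
  · exact Or.inl ⟨m, hmn, rfl⟩

-- clopen conditions
private lemma clopen_p (n : ℕ) :
    IsClopen {x : Komega | (1:ℝ) / ((n:ℝ) + 1) ≤ |(x:ℝ)|} := by
  constructor
  · exact IsClosed.preimage (continuous_subtype_val.abs) isClosed_Ici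
  · have : {x : Komega | (1:ℝ) / ((n:ℝ) + 1) ≤ |(x:ℝ)|} =
        (fun x : Komega => |(x:ℝ)|) ⁻¹' Set.Ioi ((1:ℝ) / ((n:ℝ) + 2)) := by
      ext x
      simp only [Set.mem_setOf_eq, Set.mem_preimage, Set.mem_Ioi]
      constructor
      · intro h
        have : (1:ℝ)/((n:ℝ)+2) < 1/((n:ℝ)+1) := by
          apply one_div_lt_one_div_of_lt <;> [positivity; linarith]
        linarith
      · intro h
        have hx0 : (x:ℝ) ≠ 0 := by
          rintro h0; rw [h0, abs_zero] at h
          have : (0:ℝ) < 1/((n:ℝ)+2) := by positivity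
          linarith
        obtain ⟨m, hm, habs, _⟩ := K_abs x.2 hx0
        rw [habs] at h ⊢
        rw [le_div_iff'' hm]
        have := (lt_div_iff'' hm).1 h
        omega
    rw [this]
    exact IsOpen.preimage (continuous_subtype_val.abs) isOpen_Ioi

private lemma clopen_qn (n : ℕ) :
    IsClopen {y : Lomega | (1:ℝ) / ((n:ℝ) + 1) ≤ (y:ℝ)} := by
  constructor
  · exact IsClosed.preimage continuous_subtype_val isClosed_Ici
  · have : {y : Lomega | (1:ℝ) / ((n:ℝ) + 1) ≤ (y:ℝ)} =
        (fun y : Lomega => (y:ℝ)) ⁻¹' Set.Ioi ((1:ℝ) / ((n:ℝ) + 2)) := by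
      ext y
      simp only [Set.mem_setOf_eq, Set.mem_preimage, Set.mem_Ioi]
      constructor
      · intro h
        have : (1:ℝ)/((n:ℝ)+2) < 1/((n:ℝ)+1) := by
          apply one_div_lt_one_div_of_lt <;> [positivity; linarith]
        linarith
      · intro h
        rcases y.2 with h0 | ⟨m, hm, hme⟩
        · rw [h0] at h
          have : (0:ℝ) < 1/((n:ℝ)+2) := by positivity
          linarith
        · rw [hme] at h ⊢
          rw [le_div_iff'' hm]
          have := (lt_div_iff'' hm).1 h
          omega
    rw [this]
    exact IsOpen.preimage continuous_subtype_val isOpen_Ioi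

noncomputable def qmap : Komega → Lomega := fun x => ⟨max (x:ℝ) 0, q_mem x.2⟩
noncomputable def pmap (n : ℕ) : Komega → Kfin (n + 1) := fun x =>
  ⟨if (1:ℝ) / ((n:ℝ) + 1) ≤ |(x:ℝ)| then (x:ℝ) else 0, p_mem n x.2⟩
noncomputable def qnmap (n : ℕ) : Lomega → Lfin (n + 1) := fun y =>
  ⟨if (1:ℝ) / ((n:ℝ) + 1) ≤ (y:ℝ) then (y:ℝ) else 0, qn_mem n y.2⟩
noncomputable def fmap (n : ℕ) : Kfin (n + 1) → Lfin (n + 1) := fun x =>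
  ⟨if (1:ℝ) / ((n:ℝ) + 1) ≤ (x:ℝ) then (x:ℝ) else 0, f_mem n x.2⟩

private lemma frontier_vac {X : Type*} [TopologicalSpace X] {s : Set X} (h : IsClopen s)
    {a : X} (ha : a ∈ frontier s) : False := by
  rw [h.frontier_eq] at ha; exact ha

private lemma q_cont : Continuous qmap :=
  Continuous.subtype_mk (continuous_subtype_val.max continuous_const) _

private lemma q_surj : Function.Surjective qmap := by
  intro y
  refine ⟨⟨y.1, L_subset_K y.2⟩, Subtype.ext ?_⟩
  exact max_eq_left (L_nonneg y.2)

private lemma q_formula (x : Komega) :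
    (qmap x : ℝ) = if (0:ℝ) ≤ (x:ℝ) then (x:ℝ) else 0 := by
  show max (x:ℝ) 0 = _
  split_ifs with h
  · exact max_eq_left h
  · exact max_eq_right (le_of_not_ge h)

private lemma p_cont (n : ℕ) : Continuous (pmap n) := by
  apply Continuous.subtype_mk
  exact Continuous.if (fun a ha => absurd ha (fun h => frontier_vac (clopen_p n) h))
    continuous_subtype_val continuous_const

private lemma qn_cont (n : ℕ) : Continuous (qnmap n) := by
  apply Continuous.subtype_mk
  exact Continuous.if (fun a ha => absurd ha (fun h => frontier_vac (clopen_qn n) h))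
    continuous_subtype_val continuous_const

private lemma p_surj (n : ℕ) : Function.Surjective (pmap n) := by
  intro y
  refine ⟨⟨y.1, Kfin_subset_K y.2⟩, Subtype.ext ?_⟩
  show (if (1:ℝ) / ((n:ℝ) + 1) ≤ |(y:ℝ)| then (y:ℝ) else 0) = (y:ℝ)
  rcases y.2 with h0 | ⟨m, hm, hmn, hc⟩
  · rw [h0]; split_ifs <;> rfl
  · have habs : |(y:ℝ)| = 1 / m := by
      rcases hc with hc | hc
      · rw [hc]; exact abs_of_pos (mpos hm)
      · rw [hc, abs_neg]; exact abs_of_pos (mpos hm)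
    rw [if_pos]
    rw [habs]
    exact (le_div_iff'' hm).2 hmn

private lemma qn_surj (n : ℕ) : Function.Surjective (qnmap n) := by
  intro y
  refine ⟨⟨y.1, Lfin_subset_L y.2⟩, Subtype.ext ?_⟩
  show (if (1:ℝ) / ((n:ℝ) + 1) ≤ (y:ℝ) then (y:ℝ) else 0) = (y:ℝ)
  rcases y.2 with h0 | ⟨m, hm, hmn, hc⟩
  · rw [h0]; split_ifs <;> rfl
  · rw [if_pos]
    rw [hc]
    exact (le_div_iff'' hm).2 hmn

private lemma comm_lemma (n : ℕ) (x : Komega) : qnmap n (qmap x) = fmap n (pmap n x) := by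
  apply Subtype.ext
  show (if (1:ℝ) / ((n:ℝ) + 1) ≤ max (x:ℝ) 0 then max (x:ℝ) 0 else 0) =
    (if (1:ℝ) / ((n:ℝ) + 1) ≤ (if (1:ℝ) / ((n:ℝ) + 1) ≤ |(x:ℝ)| then (x:ℝ) else 0)
      then (if (1:ℝ) / ((n:ℝ) + 1) ≤ |(x:ℝ)| then (x:ℝ) else 0) else 0)
  have h0 := hpos n
  rcases le_or_gt ((1:ℝ) / ((n:ℝ) + 1)) (x:ℝ) with h | h
  · have hmax : max (x:ℝ) 0 = (x:ℝ) := max_eq_left (by linarith)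
    have habs : (1:ℝ) / ((n:ℝ) + 1) ≤ |(x:ℝ)| := le_trans h (le_abs_self _)
    rw [hmax, if_pos h, if_pos habs, if_pos h]
  · have hmax : max (x:ℝ) 0 < (1:ℝ) / ((n:ℝ) + 1) := max_lt h h0
    rw [if_neg (not_le.2 hmax)]
    by_cases hc : (1:ℝ) / ((n:ℝ) + 1) ≤ |(x:ℝ)|
    · rw [if_pos hc, if_neg (not_le.2 h)]
    · rw [if_neg hc, if_neg (not_le.2 h0)]

private lemma not_open_q : ¬ ∃ f : Komega → Lomega, IsOpenMap f ∧ ∀ x : Komega, f x = qmap x := by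
  rintro ⟨f, hopen, hfq⟩
  have hf : f = qmap := funext hfq
  subst hf
  have hU : IsOpen {x : Komega | (x:ℝ) < 0} :=
    IsOpen.preimage continuous_subtype_val isOpen_Iio
  have himg := hopen _ hU
  have himg_eq : qmap '' {x : Komega | (x:ℝ) < 0} = {(⟨0, zero_mem_L⟩ : Lomega)} := by
    ext z
    simp only [Set.mem_image, Set.mem_setOf_eq, Set.mem_singleton_iff]
    constructor
    · rintro ⟨x, hx, rfl⟩
      exact Subtype.ext (max_eq_right hx.le)
    · rintro rfl
      refine ⟨⟨-1, Or.inr ⟨1, le_rfl, Or.inr (by norm_num)⟩⟩, by norm_num, ?_⟩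
      exact Subtype.ext (max_eq_right (by norm_num))
  rw [himg_eq] at himg
  obtain ⟨ε, hε, hball⟩ := Metric.isOpen_singleton_iff.1 himg
  obtain ⟨m, hmε⟩ := exists_nat_one_div_lt hε
  have hmem : (1:ℝ) / ((m:ℝ) + 1) ∈ Lomega :=
    Or.inr ⟨m + 1, Nat.succ_le_succ (Nat.zero_le m), by push_cast; ring⟩
  have hdist : dist (⟨(1:ℝ) / ((m:ℝ) + 1), hmem⟩ : Lomega) ⟨0, zero_mem_L⟩ < ε := by
    rw [Subtype.dist_eq, Real.dist_eq, sub_zero, abs_of_pos (hpos m)]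
    exact hmε
  have := hball _ hdist
  have hval : (1:ℝ) / ((m:ℝ) + 1) = 0 := congrArg Subtype.val this
  have := hpos m
  linarith


open Classical in
/-- The example from the paper: an inverse system on `[1, ω+1]` (with `K_{ω+1} = K_ω`,
`p_ω^{ω+1} = id` and `f = id : K_{ω+1} → L_{ω+1}`) for which the set
`T = {α : ∃ open f_α with q_α^{ω+1} ∘ f = f_α ∘ p_α^{ω+1}}` contains every finite `n ≥ 1`
but not `ω`: there exist the surjective continuous bonding maps `q : K_ω → L_ω`,
`p_n : K_ω → K_n`, `q_n : L_ω → L_n` (sending points outside the range to `0`) such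
that for each `n` there is an open `f_n : K_n → L_n` with `q_n ∘ q = f_n ∘ p_n`, yet
there is no open map `f_ω : K_ω → L_ω` with `f_ω = q` (equivalently, commuting with
`p_ω^{ω+1} = id`); so `T` is not σ-closed. -/
theorem stmt_16 :
    ∃ (q : Komega → Lomega) (p : ∀ n : ℕ, Komega → Kfin (n + 1))
      (qn : ∀ n : ℕ, Lomega → Lfin (n + 1)),
      -- the bonding maps are the ones described, continuous and surjective
      (Continuous q ∧ Function.Surjective q ∧
        ∀ x : Komega, (q x : ℝ) = if (0:ℝ) ≤ (x : ℝ) then (x : ℝ) else 0) ∧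
      (∀ n : ℕ, Continuous (p n) ∧ Function.Surjective (p n) ∧
        ∀ x : Komega, ((p n x : ℝ) =
          if (1:ℝ) / (n + 1) ≤ |(x : ℝ)| then (x : ℝ) else 0)) ∧
      (∀ n : ℕ, Continuous (qn n) ∧ Function.Surjective (qn n) ∧
        ∀ y : Lomega, ((qn n y : ℝ) =
          if (1:ℝ) / (n + 1) ≤ (y : ℝ) then (y : ℝ) else 0)) ∧
      -- every finite index belongs to T
      (∀ n : ℕ, ∃ f : Kfin (n + 1) → Lfin (n + 1),
        Continuous f ∧ IsOpenMap f ∧ ∀ x : Komega, qn n (q x) = f (p n x)) ∧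
      -- but ω does not belong to T (since p_ω^{ω+1} = id forces f_ω = q)
      ¬ ∃ f : Komega → Lomega, IsOpenMap f ∧ ∀ x : Komega, f x = q x := by 

  refine ⟨qmap, pmap, qnmap, ⟨q_cont, q_surj, q_formula⟩,
    fun n => ⟨p_cont n, p_surj n, fun x => rfl⟩,
    fun n => ⟨qn_cont n, qn_surj n, fun y => rfl⟩,
    fun n => ⟨fmap n, ?_, ?_, comm_lemma n⟩, not_open_q⟩
  · haveI := (Kfin_finite (n + 1)).to_subtype
    exact continuous_of_discreteTopology
  · intro U hU
    haveI := (Lfin_finite (n + 1)).to_subtype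
    exact isOpen_discrete _
end
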